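/- Let Ω₁ ⊂ ℝ be a bounded open set, Ω₂ ⊂ ℝ a bounded open set, and Ω = Ω₁ × Ω₂ ⊂ ℝ². If the Dirichlet eigenvalues of Ω₁ satisfy Pólya's conjecture N_{Ω₁}^D(λ) ≤ (|Ω₁|/π)√λ (automatic in 1D), then for all λ > 0 the counting function of Ω satisfies N_Ω^D(λ) ≤ (|Ω₁||Ω₂|/(4π)) λ (1 − 2/(3|Ω₂|√λ))_+. -/

import Mathlib

/-!
Count the eigenvalues of the product row by row: for fixed `j` the number of `i` with
`λᵢ(Ω₁) < Λ - λⱼ(Ω₂)` is at most `(L₁/π) √(Λ - λⱼ(Ω₂))`, so with `T = L₂√Λ/π` one gets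
`N_Ω(Λ) ≤ (L₁/L₂) ∑_{k ≥ 1} √(T² - k²)₊`. This lattice sum is compared with the area `πT²/4` of
the quarter disc by the trapezoid rule for the concave function `√(T² - x²)`: the half value `T/2`
at `x = 0`, together with the triangle under the last chord from `⌊T⌋` to `T`, saves at least `T/6`.
-/

open Real Set Finset

theorem integral_sqrt_sq_sub_sq {T : ℝ} (hT : 0 ≤ T) :
    ∫ x in (0 : ℝ)..T, √(T ^ 2 - x ^ 2) = π * T ^ 2 / 4 := by
  have hcont : Continuous fun x : ℝ => √(T ^ 2 - x ^ 2) := by fun_prop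
  have heven : ∫ x in -T..0, √(T ^ 2 - x ^ 2) = ∫ x in (0 : ℝ)..T, √(T ^ 2 - x ^ 2) := by
    have h := intervalIntegral.integral_comp_neg (a := 0) (b := T) fun x => √(T ^ 2 - x ^ 2)
    simp only [neg_sq, neg_zero] at h
    exact h.symm
  have hsymm : ∫ x in -T..T, √(T ^ 2 - x ^ 2) = π * T ^ 2 / 2 := by
    rcases hT.eq_or_lt with rfl | hT
    · simp
    have h := intervalIntegral.integral_comp_mul_left (a := -1) (b := 1)
      (fun x => √(T ^ 2 - x ^ 2)) hT.ne'
    have hscale : ∀ y : ℝ, √(T ^ 2 - (T * y) ^ 2) = T * √(1 - y ^ 2) := fun y => by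
      rw [show T ^ 2 - (T * y) ^ 2 = T ^ 2 * (1 - y ^ 2) by ring, sqrt_mul (sq_nonneg T),
        sqrt_sq hT.le]
    simp only [hscale, intervalIntegral.integral_const_mul, integral_sqrt_one_sub_sq, mul_neg,
      mul_one, smul_eq_mul] at h
    rw [eq_inv_mul_iff_mul_eq₀ hT.ne'] at h
    linear_combination -h
  rw [← intervalIntegral.integral_add_adjacent_intervals (hcont.intervalIntegrable _ 0)
    (hcont.intervalIntegrable 0 _), heven] at hsymm
  linarith

theorem concaveOn_sqrt_sq_sub_sq (T : ℝ) :
    ConcaveOn ℝ (Icc (-T) T) fun x => √(T ^ 2 - x ^ 2) := by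
  refine ⟨convex_Icc _ _, fun x hx y hy a b ha hb hab => ?_⟩
  have hx' : √(T ^ 2 - x ^ 2) ^ 2 = T ^ 2 - x ^ 2 := sq_sqrt (by nlinarith [sq_le_sq' hx.1 hx.2])
  have hy' : √(T ^ 2 - y ^ 2) ^ 2 = T ^ 2 - y ^ 2 := sq_sqrt (by nlinarith [sq_le_sq' hy.1 hy.2])
  simp only [smul_eq_mul]
  refine le_sqrt_of_sq_le ?_
  obtain rfl : b = 1 - a := by linarith
  nlinarith [mul_nonneg ha hb, sq_nonneg (√(T ^ 2 - x ^ 2) - √(T ^ 2 - y ^ 2)), sq_nonneg (x - y)]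

theorem ConcaveOn.trapezoid_le_integral {f : ℝ → ℝ} {a b : ℝ} (hab : a ≤ b)
    (hf : ConcaveOn ℝ (Icc a b) f) (hfi : IntervalIntegrable f MeasureTheory.volume a b) :
    (b - a) * (f a + f b) / 2 ≤ ∫ x in a..b, f x := by
  rcases hab.eq_or_lt with rfl | hab
  · simp
  set s := (f b - f a) / (b - a)
  have hchord : ∀ x ∈ Icc a b, f a + (x - a) * s ≤ f x := fun x hx => by
    have h := hf.2 (left_mem_Icc.2 hab.le) (right_mem_Icc.2 hab.le)
      (div_nonneg (sub_nonneg.2 hx.2) (sub_nonneg.2 hab.le))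
      (div_nonneg (sub_nonneg.2 hx.1) (sub_nonneg.2 hab.le))
      (by field_simp; ring)
    have hx' : ((b - x) / (b - a)) • a + ((x - a) / (b - a)) • b = x := by
      simp only [smul_eq_mul]; field_simp; ring
    rw [hx', smul_eq_mul, smul_eq_mul] at h
    calc f a + (x - a) * s = (b - x) / (b - a) * f a + (x - a) / (b - a) * f b := by
          simp only [s]; field_simp; ring
      _ ≤ f x := h
  have hcont : Continuous fun x => f a + (x - a) * s := by fun_prop
  have hint := intervalIntegral.integral_mono_on hab.le (hcont.intervalIntegrable _ _) hfi hchord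
  have hchord_integral : ∫ x in a..b, f a + (x - a) * s = (b - a) * (f a + f b) / 2 := by
    rw [intervalIntegral.integral_add intervalIntegrable_const
      ((by fun_prop : Continuous fun x => (x - a) * s).intervalIntegrable _ _),
      intervalIntegral.integral_const, intervalIntegral.integral_mul_const,
      intervalIntegral.integral_comp_sub_right (fun x => x), integral_id]
    simp only [sub_self, smul_eq_mul, s]
    field_simp; ring
  linarith

theorem sum_range_sqrt_sq_sub_sq_le {T : ℝ} {M : ℕ} (hM : (M : ℝ) ≤ T) :
    ∑ k ∈ range M, √(T ^ 2 - ((k : ℝ) + 1) ^ 2) ≤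
      π * T ^ 2 / 4 - T / 2 + (1 - (T - M)) * √(T ^ 2 - (M : ℝ) ^ 2) / 2 := by
  set f : ℝ → ℝ := fun x => √(T ^ 2 - x ^ 2)
  show ∑ k ∈ range M, f (k + 1) ≤ π * T ^ 2 / 4 - T / 2 + (1 - (T - M)) * f M / 2
  have hT : 0 ≤ T := M.cast_nonneg.trans hM
  have hint : ∀ a b, IntervalIntegrable f MeasureTheory.volume a b := fun a b =>
    (by fun_prop : Continuous f).intervalIntegrable a b
  have hconc : ∀ a b, 0 ≤ a → b ≤ T → ConcaveOn ℝ (Icc a b) f := fun a b ha hb =>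
    (concaveOn_sqrt_sq_sub_sq T).subset (Icc_subset_Icc (by linarith) hb) (convex_Icc a b)
  have htrap : ∀ k ∈ range M, (f k + f (k + 1)) / 2 ≤ ∫ x in (k : ℝ)..(k + 1 : ℕ), f x :=
    fun k hk => by
      have hkM : (k : ℝ) + 1 ≤ M := by exact_mod_cast Finset.mem_range.1 hk
      simpa using (hconc k (k + 1) k.cast_nonneg (by linarith)).trapezoid_le_integral
        (by linarith) (hint _ _)
  have hsum : ∑ k ∈ range M, (f k + f (k + 1)) / 2 ≤ ∫ x in (0 : ℝ)..M, f x := by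
    have h := intervalIntegral.sum_integral_adjacent_intervals (a := fun k : ℕ => (k : ℝ))
      (μ := MeasureTheory.volume) (n := M) fun k _ => hint _ _
    rw [Nat.cast_zero] at h
    exact h ▸ Finset.sum_le_sum htrap
  have htail : (T - M) * f M / 2 ≤ ∫ x in (M : ℝ)..T, f x := by
    simpa [f] using (hconc M T M.cast_nonneg le_rfl).trapezoid_le_integral hM (hint _ _)
  have hsplit := intervalIntegral.integral_add_adjacent_intervals (hint 0 M) (hint M T)
  rw [integral_sqrt_sq_sub_sq hT] at hsplit
  have htelescope : ∑ k ∈ range M, (f k + f (k + 1)) / 2 =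
      ∑ k ∈ range M, f (k + 1) - (f M - f 0) / 2 := by
    have h : ∑ k ∈ range M, (f (k + 1) - f k) = f M - f 0 := by
      simpa using Finset.sum_range_sub (fun k : ℕ => f k) M
    rw [← h, Finset.sum_div, ← Finset.sum_sub_distrib]
    exact Finset.sum_congr rfl fun k _ => by ring
  have hf0 : f 0 = T := by simp [f, sqrt_sq hT]
  linear_combination -htelescope + hsum + htail + hsplit - hf0 / 2

theorem one_sub_mul_sqrt_sq_sub_sq_le {T : ℝ} {M : ℕ} (hT : 1 ≤ T) (hM : (M : ℝ) ≤ T)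
    (hM' : T < M + 1) : (1 - (T - M)) * √(T ^ 2 - (M : ℝ) ^ 2) ≤ 2 * T / 3 := by
  set δ := T - M
  have hs : √(T ^ 2 - (M : ℝ) ^ 2) ^ 2 = T ^ 2 - (M : ℝ) ^ 2 := sq_sqrt (by nlinarith)
  have hcubic : δ * (1 - δ) ^ 2 ≤ 4 / 27 := by
    nlinarith [mul_nonneg (sq_nonneg (δ - 1 / 3)) (by linarith : (0 : ℝ) ≤ 4 / 3 - δ)]
  refine (pow_le_pow_iff_left₀ (mul_nonneg (by linarith) (sqrt_nonneg _)) (by positivity)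
    two_ne_zero).1 ?_
  calc ((1 - δ) * √(T ^ 2 - (M : ℝ) ^ 2)) ^ 2 = (1 - δ) ^ 2 * (δ * (2 * T - δ)) := by
        rw [mul_pow, hs]; ring
    _ ≤ 2 * T * (δ * (1 - δ) ^ 2) := by nlinarith [sq_nonneg (1 - δ), sq_nonneg δ]
    _ ≤ (2 * T / 3) ^ 2 := by nlinarith

/-- The Riesz mean bound for the Dirichlet eigenvalues `(k + 1)²` of an interval of length `π`. -/
theorem sum_sqrt_sub_sq_le {μ : ℝ} (hμ : 0 ≤ μ) :
    ∑ k ∈ range ⌊√μ⌋₊, √(μ - ((k : ℝ) + 1) ^ 2) ≤ π * μ / 4 * max (1 - 2 / (3 * π * √μ)) 0 := by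
  obtain ⟨T, hT, rfl⟩ : ∃ T, 0 ≤ T ∧ μ = T ^ 2 := ⟨√μ, sqrt_nonneg μ, (sq_sqrt hμ).symm⟩
  rw [sqrt_sq hT]
  rcases lt_or_ge T 1 with hT1 | hT1
  · rw [Nat.floor_eq_zero.2 hT1, sum_range_zero]
    positivity
  have hπT : 2 ≤ 3 * π * T := by nlinarith [pi_gt_three]
  calc ∑ k ∈ range ⌊T⌋₊, √(T ^ 2 - ((k : ℝ) + 1) ^ 2)
      ≤ π * T ^ 2 / 4 - T / 2 + (1 - (T - ⌊T⌋₊)) * √(T ^ 2 - (⌊T⌋₊ : ℝ) ^ 2) / 2 :=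
        sum_range_sqrt_sq_sub_sq_le (Nat.floor_le hT)
    _ ≤ π * T ^ 2 / 4 - T / 6 := by
        linarith [one_sub_mul_sqrt_sq_sub_sq_le hT1 (Nat.floor_le hT) (Nat.lt_floor_add_one T)]
    _ = π * T ^ 2 / 4 * max (1 - 2 / (3 * π * T)) 0 := by
        rw [max_eq_left (by rw [sub_nonneg, div_le_one (by positivity)]; exact hπT)]
        field_simp
        ring

noncomputable def countingFunction {ι : Type*} (lam : ι → ℝ) (μ : ℝ) : ℕ :=
  Nat.card {i // lam i < μ}

theorem lt_floor_sqrt_div_of_mul_sq_lt {a μ : ℝ} {k : ℕ} (ha : 0 < a)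
    (hk : a * ((k : ℝ) + 1) ^ 2 < μ) : k < ⌊√(μ / a)⌋₊ := by
  have hlt : (k : ℝ) + 1 < √(μ / a) := lt_sqrt_of_sq_lt (by rwa [lt_div_iff₀ ha, mul_comm])
  exact Nat.lt_of_succ_le (Nat.le_floor (by exact_mod_cast hlt.le))

section QuadraticGrowth

variable {a : ℝ} {lam : ℕ → ℝ}

noncomputable def ltEmbeddingFin (ha : 0 < a) (hlam : ∀ k : ℕ, a * ((k : ℝ) + 1) ^ 2 ≤ lam k)
    (μ : ℝ) : {k // lam k < μ} ↪ Fin ⌊√(μ / a)⌋₊ where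
  toFun k := ⟨k.1, lt_floor_sqrt_div_of_mul_sq_lt ha ((hlam k).trans_lt k.2)⟩
  inj' _ _ h := Subtype.ext (congrArg Fin.val h)

theorem finite_lt_of_mul_sq_le (ha : 0 < a) (hlam : ∀ k : ℕ, a * ((k : ℝ) + 1) ^ 2 ≤ lam k)
    (μ : ℝ) : Finite {k // lam k < μ} :=
  Finite.of_injective _ (ltEmbeddingFin ha hlam μ).injective

theorem countingFunction_le_sqrt_div (ha : 0 < a)
    (hlam : ∀ k : ℕ, a * ((k : ℝ) + 1) ^ 2 ≤ lam k) (μ : ℝ) :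
    (countingFunction lam μ : ℝ) ≤ √(μ / a) := by
  have h := Nat.card_le_card_of_injective _ (ltEmbeddingFin ha hlam μ).injective
  rw [Nat.card_fin] at h
  exact (Nat.cast_le.2 h).trans (Nat.floor_le (sqrt_nonneg _))

end QuadraticGrowth

theorem natCard_subtype_prod_eq_sum {P : ℕ → ℕ → Prop} {n : ℕ} (hP : ∀ i j, P i j → j < n)
    (hfin : ∀ j, Finite {i // P i j}) :
    Nat.card {q : ℕ × ℕ // P q.1 q.2} = ∑ j ∈ range n, Nat.card {i // P i j} := by
  let e : {q : ℕ × ℕ // P q.1 q.2} ≃ Σ j : Fin n, {i // P i j} :=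
    { toFun := fun q => ⟨⟨q.1.2, hP _ _ q.2⟩, ⟨q.1.1, q.2⟩⟩
      invFun := fun p => ⟨(p.2.1, p.1), p.2.2⟩
      left_inv := fun _ => rfl
      right_inv := fun _ => rfl }
  rw [Nat.card_congr e, Nat.card_sigma, Fin.sum_univ_eq_sum_range (fun j => Nat.card {i // P i j})]

theorem countingFunction_add_le {a₁ a₂ : ℝ} {lam₁ lam₂ : ℕ → ℝ} (ha₁ : 0 < a₁) (ha₂ : 0 < a₂)
    (hlam₁ : ∀ k : ℕ, a₁ * ((k : ℝ) + 1) ^ 2 ≤ lam₁ k)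
    (hlam₂ : ∀ k : ℕ, a₂ * ((k : ℝ) + 1) ^ 2 ≤ lam₂ k) (Λ : ℝ) :
    (countingFunction (fun q : ℕ × ℕ => lam₁ q.1 + lam₂ q.2) Λ : ℝ) ≤
      √(a₂ / a₁) * ∑ k ∈ range ⌊√(Λ / a₂)⌋₊, √(Λ / a₂ - ((k : ℝ) + 1) ^ 2) := by
  have hpos : ∀ k, 0 < lam₁ k := fun k =>
    (by positivity : 0 < a₁ * ((k : ℝ) + 1) ^ 2).trans_le (hlam₁ k)
  have hrows : countingFunction (fun q : ℕ × ℕ => lam₁ q.1 + lam₂ q.2) Λ =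
      ∑ j ∈ range ⌊√(Λ / a₂)⌋₊, countingFunction lam₁ (Λ - lam₂ j) := by
    simp_rw [countingFunction, ← lt_sub_iff_add_lt]
    exact natCard_subtype_prod_eq_sum (P := fun i j => lam₁ i < Λ - lam₂ j)
      (fun i j h => lt_floor_sqrt_div_of_mul_sq_lt ha₂ (by linarith [hlam₂ j, hpos i]))
      fun j => finite_lt_of_mul_sq_le ha₁ hlam₁ _
  rw [hrows, Nat.cast_sum, mul_sum]
  refine sum_le_sum fun j _ => (countingFunction_le_sqrt_div ha₁ hlam₁ _).trans ?_
  rw [← sqrt_mul (by positivity)]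
  refine sqrt_le_sqrt ?_
  calc (Λ - lam₂ j) / a₁ ≤ (Λ - a₂ * ((j : ℝ) + 1) ^ 2) / a₁ := by gcongr; exact hlam₂ j
    _ = a₂ / a₁ * (Λ / a₂ - ((j : ℝ) + 1) ^ 2) := by field_simp

theorem product_counting_dim_two_general
    (L₁ L₂ : ℝ)
    (hL₁pos : 0 < L₁) (hL₂pos : 0 < L₂)
    (lam1 lam2 : ℕ → ℝ)
    (hlam1 : ∀ k : ℕ, π ^ 2 * ((k : ℝ) + 1) ^ 2 / L₁ ^ 2 ≤ lam1 k)
    (hlam2 : ∀ k : ℕ, π ^ 2 * ((k : ℝ) + 1) ^ 2 / L₂ ^ 2 ≤ lam2 k)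
    (Λ : ℝ) (hΛ : 0 < Λ) :
    (Nat.card {q : ℕ × ℕ // lam1 q.1 + lam2 q.2 < Λ} : ℝ) ≤
      L₁ * L₂ / (4 * π) * Λ * max (1 - 2 / (3 * L₂ * Real.sqrt Λ)) 0 := by
  have h₁ : ∀ k : ℕ, (π / L₁) ^ 2 * ((k : ℝ) + 1) ^ 2 ≤ lam1 k := fun k => by
    rw [div_pow, div_mul_eq_mul_div]; exact hlam1 k
  have h₂ : ∀ k : ℕ, (π / L₂) ^ 2 * ((k : ℝ) + 1) ^ 2 ≤ lam2 k := fun k => by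
    rw [div_pow, div_mul_eq_mul_div]; exact hlam2 k
  have hratio : √((π / L₂) ^ 2 / (π / L₁) ^ 2) = L₁ / L₂ := by
    rw [← div_pow, sqrt_sq (by positivity)]; field_simp
  have hT : √(Λ / (π / L₂) ^ 2) = L₂ * √Λ / π := by
    rw [sqrt_div' _ (by positivity), sqrt_sq (by positivity)]; field_simp
  calc (Nat.card {q : ℕ × ℕ // lam1 q.1 + lam2 q.2 < Λ} : ℝ)
      ≤ √((π / L₂) ^ 2 / (π / L₁) ^ 2) * ∑ k ∈ range ⌊√(Λ / (π / L₂) ^ 2)⌋₊,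
          √(Λ / (π / L₂) ^ 2 - ((k : ℝ) + 1) ^ 2) :=
        countingFunction_add_le (by positivity) (by positivity) h₁ h₂ Λ
    _ ≤ L₁ / L₂ * (π * (Λ / (π / L₂) ^ 2) / 4 *
          max (1 - 2 / (3 * π * √(Λ / (π / L₂) ^ 2))) 0) := by
        rw [hratio]; gcongr; exact sum_sqrt_sub_sq_le (by positivity)
    _ = L₁ * L₂ / (4 * π) * Λ * max (1 - 2 / (3 * L₂ * Real.sqrt Λ)) 0 := by
        rw [hT, show 3 * π * (L₂ * √Λ / π) = 3 * L₂ * √Λ by field_simp]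
        field_simp

/-- Let `Ω₁, Ω₂ ⊂ ℝ` be bounded open sets of measures
`L₁, L₂ > 0`, with Dirichlet eigenvalues `lam1, lam2` (increasing, `lamᵢ k` the
(k+1)-th eigenvalue) satisfying the 1D Pólya bound `λ_k ≥ π²k²/Lᵢ²`.  The
Dirichlet spectrum of `Ω = Ω₁ × Ω₂ ⊂ ℝ²` is the multiset of sums
`lam1 i + lam2 j`, and for all `Λ > 0`:
`N_Ω^D(Λ) ≤ (L₁L₂/(4π)) Λ (1 - 2/(3L₂√Λ))_+`. -/
theorem product_counting_dim_two
    (Ω₁ Ω₂ : Set ℝ) (h1o : IsOpen Ω₁) (h1b : Bornology.IsBounded Ω₁)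
    (h2o : IsOpen Ω₂) (h2b : Bornology.IsBounded Ω₂)
    (L₁ L₂ : ℝ) (hL₁ : L₁ = (MeasureTheory.volume Ω₁).toReal)
    (hL₂ : L₂ = (MeasureTheory.volume Ω₂).toReal)
    (hL₁pos : 0 < L₁) (hL₂pos : 0 < L₂)
    (lam1 lam2 : ℕ → ℝ) (hmono1 : Monotone lam1) (hmono2 : Monotone lam2)
    (hlam1 : ∀ k : ℕ, π ^ 2 * ((k : ℝ) + 1) ^ 2 / L₁ ^ 2 ≤ lam1 k)
    (hlam2 : ∀ k : ℕ, π ^ 2 * ((k : ℝ) + 1) ^ 2 / L₂ ^ 2 ≤ lam2 k)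
    (Λ : ℝ) (hΛ : 0 < Λ) :
    (Nat.card {q : ℕ × ℕ // lam1 q.1 + lam2 q.2 < Λ} : ℝ) ≤
      L₁ * L₂ / (4 * π) * Λ * max (1 - 2 / (3 * L₂ * Real.sqrt Λ)) 0 :=
  product_counting_dim_two_general L₁ L₂ hL₁pos hL₂pos lam1 lam2 hlam1 hlam2 Λ hΛ
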